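/- Let V be a finite-dimensional complex vector space, f₁, …, f_i ∈ V linearly independent, E = f₁ ∧ … ∧ f_i, v ∈ V with v ∧ E ≠ 0, and i ≤ k ≤ n = dim V. Then every ψ ∈ E ∧ Λ^{k-i}V with v ∧ ψ = 0 can be written as ψ = v ∧ φ for some φ ∈ E ∧ Λ^{k-1-i}V (where Λ^{-1}V := 0). -/

import Mathlib

/-!
Pick a linear form `ξ` with `ξ v = 1` vanishing on the `f t`; it exists because `v ∧ E ≠ 0` forces
`v ∉ span f`. Contraction `ξ⌋` is an antiderivation lowering degrees by one, so `v ∧ ψ = 0` gives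
`ψ = v ∧ (ξ⌋ψ)`, and since `ξ` kills every factor of `E`, `ξ⌋(E ∧ ω) = ± E ∧ (ξ⌋ω)` lies in
`E ∧ Λ^{k-1-i}V`.
-/

open ExteriorAlgebra CliffordAlgebra Submodule

namespace ExteriorAlgebra

variable {R M : Type*} [CommRing R] [AddCommGroup M] [Module R M]

theorem contractLeft_eq_zero_of_mem_exteriorPower_zero (ξ : Module.Dual R M)
    {x : ExteriorAlgebra R M} (hx : x ∈ ⋀[R]^0 M) : contractLeft ξ x = 0 := by
  rw [exteriorPower, pow_zero, mem_one] at hx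
  obtain ⟨r, rfl⟩ := hx
  exact contractLeft_algebraMap (Q := 0) ξ r

theorem contractLeft_mem_exteriorPower (ξ : Module.Dual R M) {m : ℕ} {x : ExteriorAlgebra R M}
    (hx : x ∈ ⋀[R]^(m + 1) M) : contractLeft ξ x ∈ ⋀[R]^m M := by
  induction m generalizing x with
  | zero =>
    rw [exteriorPower, zero_add, pow_one] at hx
    obtain ⟨a, rfl⟩ := hx
    rw [contractLeft_ι, exteriorPower, pow_zero]
    exact Submodule.algebraMap_mem (ξ a)
  | succ m ih =>
    rw [exteriorPower, pow_succ'] at hx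
    induction hx using Submodule.mul_induction_on' with
    | mem_mul_mem a ha b hb =>
      obtain ⟨a, rfl⟩ := ha
      rw [contractLeft_ι_mul]
      refine sub_mem (smul_mem _ _ hb) ?_
      rw [exteriorPower, pow_succ']
      exact mul_mem_mul (LinearMap.mem_range_self _ a) (ih hb)
    | add x _ y _ hx hy => exact map_add (contractLeft ξ) x y ▸ add_mem hx hy

theorem contractLeft_ι_mul_of_apply_eq_zero (ξ : Module.Dual R M) {a : M} (ha : ξ a = 0)
    (x : ExteriorAlgebra R M) : contractLeft ξ (ι R a * x) = -(ι R a * contractLeft ξ x) := by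
  rw [contractLeft_ι_mul, ha, zero_smul, zero_sub]

theorem contractLeft_prod_ofFn_mul (ξ : Module.Dual R M) {i : ℕ} (f : Fin i → M)
    (hf : ∀ t, ξ (f t) = 0) (x : ExteriorAlgebra R M) :
    contractLeft ξ ((List.ofFn fun t => ι R (f t)).prod * x) =
      (-1 : R) ^ i • ((List.ofFn fun t => ι R (f t)).prod * contractLeft ξ x) := by
  induction i with
  | zero => simp
  | succ i ih =>
    rw [List.ofFn_succ, List.prod_cons, mul_assoc, contractLeft_ι_mul_of_apply_eq_zero ξ (hf 0),
      ih (fun t => f t.succ) (fun t => hf t.succ), mul_smul_comm, ← mul_assoc, pow_succ', mul_smul,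
      neg_one_smul]

theorem eq_ι_mul_contractLeft_of_ι_mul_eq_zero (ξ : Module.Dual R M) {v : M} (hv : ξ v = 1)
    {x : ExteriorAlgebra R M} (hx : ι R v * x = 0) : x = ι R v * contractLeft ξ x := by
  have h := contractLeft_ι_mul (Q := 0) ξ v x
  rwa [hx, map_zero, hv, one_smul, eq_comm, sub_eq_zero] at h

theorem ι_mul_prod_ofFn_eq_zero_of_mem_span {i : ℕ} (f : Fin i → M) {a : M}
    (ha : a ∈ span R (Set.range f)) : ι R a * (List.ofFn fun t => ι R (f t)).prod = 0 := by
  have : span R (Set.range f) ≤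
      LinearMap.ker ((LinearMap.mulRight R (List.ofFn fun t => ι R (f t)).prod) ∘ₗ ι R) := by
    rw [span_le]
    rintro _ ⟨t, rfl⟩
    exact ι_mul_prod_list f t
  exact this ha

end ExteriorAlgebra

theorem Submodule.exists_dual_eq_one_and_le_ker_of_notMem {K V : Type*} [Field K] [AddCommGroup V]
    [Module K V] {p : Submodule K V} {v : V} (hv : v ∉ p) :
    ∃ ξ : Module.Dual K V, ξ v = 1 ∧ p ≤ LinearMap.ker ξ := by
  obtain ⟨ξ, hξv, hpξ⟩ := exists_le_ker_of_notMem hv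
  refine ⟨(ξ v)⁻¹ • ξ, inv_mul_cancel₀ hξv, fun x hx => ?_⟩
  simp [LinearMap.mem_ker.mp (hpξ hx)]

theorem stmt13_general (V : Type*) [AddCommGroup V] [Module ℂ V]
    (i k : ℕ) (f : Fin i → V)
    (E : ExteriorAlgebra ℂ V) (hE : E = (List.ofFn fun t => ι ℂ (f t)).prod)
    (v : V) (hvE : ι ℂ v * E ≠ 0)
    (ψ : ExteriorAlgebra ℂ V)
    (hψ : ψ ∈ Submodule.map (LinearMap.mulLeft ℂ E) (⋀[ℂ]^(k - i) V))
    (hker : ι ℂ v * ψ = 0) :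
    ∃ φ ∈ (if k = i then (⊥ : Submodule ℂ (ExteriorAlgebra ℂ V))
      else Submodule.map (LinearMap.mulLeft ℂ E) (⋀[ℂ]^(k - 1 - i) V)),
      ψ = ι ℂ v * φ := by
  subst hE
  obtain ⟨ξ, hξv, hξf⟩ : ∃ ξ : Module.Dual ℂ V, ξ v = 1 ∧ ∀ t, ξ (f t) = 0 := by
    have hv : v ∉ span ℂ (Set.range f) := fun hv => hvE (ι_mul_prod_ofFn_eq_zero_of_mem_span f hv)
    obtain ⟨ξ, hξv, hξker⟩ := exists_dual_eq_one_and_le_ker_of_notMem hv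
    exact ⟨ξ, hξv, fun t => hξker (subset_span ⟨t, rfl⟩)⟩
  refine ⟨contractLeft ξ ψ, ?_, eq_ι_mul_contractLeft_of_ι_mul_eq_zero ξ hξv hker⟩
  obtain ⟨ω, hω, rfl⟩ := hψ
  rw [LinearMap.mulLeft_apply, contractLeft_prod_ofFn_mul ξ f hξf]
  rcases hki : k - i with _ | m <;> rw [hki] at hω
  · rw [contractLeft_eq_zero_of_mem_exteriorPower_zero ξ hω, mul_zero, smul_zero]
    split_ifs <;> exact zero_mem _
  · rw [if_neg (by omega), show k - 1 - i = m by omega]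
    exact smul_mem _ _ (mem_map_of_mem (contractLeft_mem_exteriorPower ξ hω))

/-- Lemma 4.4(2) in multilinear-algebra form.
With `f₁, …, f_i` linearly independent, `E = f₁ ∧ ⋯ ∧ f_i`, `v ∧ E ≠ 0`, and
`i ≤ k ≤ n = dim V`: every `ψ ∈ E ∧ Λ^{k-i}V` with `v ∧ ψ = 0` can be written
as `ψ = v ∧ φ` with `φ ∈ E ∧ Λ^{k-1-i}V` (where for `k = i` the space
`Λ^{-1}V := 0`). -/
theorem stmt13 (V : Type*) [AddCommGroup V] [Module ℂ V] [FiniteDimensional ℂ V]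
    (n i k : ℕ) (hn : Module.finrank ℂ V = n) (hik : i ≤ k) (hkn : k ≤ n)
    (f : Fin i → V) (hf : LinearIndependent ℂ f)
    (E : ExteriorAlgebra ℂ V) (hE : E = (List.ofFn fun t => ι ℂ (f t)).prod)
    (v : V) (hvE : ι ℂ v * E ≠ 0)
    (ψ : ExteriorAlgebra ℂ V)
    (hψ : ψ ∈ Submodule.map (LinearMap.mulLeft ℂ E) (⋀[ℂ]^(k - i) V))
    (hker : ι ℂ v * ψ = 0) :
    ∃ φ ∈ (if k = i then (⊥ : Submodule ℂ (ExteriorAlgebra ℂ V))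
      else Submodule.map (LinearMap.mulLeft ℂ E) (⋀[ℂ]^(k - 1 - i) V)),
      ψ = ι ℂ v * φ :=
  stmt13_general V i k f E hE v hvE ψ hψ hker
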